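/- arXiv:2602.14500 — 8 statements merged into one kernel-verified Lean document; each statement's English description precedes it below -/
import Mathlib

section
/- Let G be a graph, k ≥ 0, and H a convex subgraph of G. If S ⊆ V(H) is a mutual k-visible set in G, then S is a mutual k-visible set in H. -/
open scoped Classical

variable {V : Type*}

/-- The number of internal vertices of a walk `p` that lie in `X`. -/
noncomputable def internalCount {G : SimpleGraph V} {u v : V}
    (p : G.Walk u v) (X : Finset V) : ℕ :=
  p.support.tail.dropLast.countP (fun x => decide (x ∈ X))

/-- `X` is a mutual `k`-visible set in `G`: every pair of distinct vertices of `X`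
admits a shortest path with at most `k` internal vertices in `X`. -/
def MutVis (G : SimpleGraph V) (X : Finset V) (k : ℕ) : Prop :=
  ∀ u ∈ X, ∀ v ∈ X, u ≠ v → ∃ p : G.Walk u v, p.IsPath ∧ p.length = G.dist u v ∧
    internalCount p X ≤ k

/-- The mutual `k`-visibility number of `G`. -/
noncomputable def muK [Fintype V] (G : SimpleGraph V) (k : ℕ) : ℕ :=
  sSup {n | ∃ X : Finset V, MutVis G X k ∧ X.card = n}

/-- A vertex set `W` is convex in `G` if every shortest path between vertices of `W`
lies entirely in `W`. -/
def GIsConvex (G : SimpleGraph V) (W : Set V) : Prop :=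
  ∀ u ∈ W, ∀ v ∈ W, ∀ p : G.Walk u v, p.IsPath → p.length = G.dist u v →
    ∀ x ∈ p.support, x ∈ W

/-!
A shortest path of `G` between two vertices of a convex set `W` lies in `W`, so it lifts to a
walk of `G[W]` of the same length. Since `G[W]` embeds in `G`, distances in `G[W]` are at least
those in `G`; hence the lift is a shortest path of `G[W]`, and it meets `S` in the same internal
vertices as the original path.
-/

namespace SimpleGraph

variable {V' : Type*} {G : SimpleGraph V} {G' : SimpleGraph V'} {u v : V}

lemma Reachable.dist_map_le (f : G →g G') (h : G.Reachable u v) :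
    G'.dist (f u) (f v) ≤ G.dist u v := by
  obtain ⟨p, hp⟩ := h.exists_walk_length_eq_dist
  calc G'.dist (f u) (f v) ≤ (p.map f).length := dist_le _
    _ = G.dist u v := by rw [Walk.length_map, hp]

namespace Walk

lemma internalCount_map (f : G →g G') (p : G.Walk u v) {X : Finset V'} {Y : Finset V}
    (h : ∀ x, x ∈ Y ↔ f x ∈ X) : internalCount (p.map f) X = internalCount p Y := by
  unfold internalCount
  rw [support_map, ← List.map_tail, ← List.map_dropLast, List.countP_map]
  exact List.countP_congr fun x _ => by simp [h]

variable {s : Set V}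

lemma length_induce (p : G.Walk u v) (hp : ∀ x ∈ p.support, x ∈ s) :
    (p.induce s hp).length = p.length :=
  (length_map _ _).symm.trans (congrArg length (map_induce p hp))

lemma isPath_induce_iff (p : G.Walk u v) (hp : ∀ x ∈ p.support, x ∈ s) :
    (p.induce s hp).IsPath ↔ p.IsPath := by
  conv_rhs => rw [← map_induce p hp]
  exact (isPath_map_iff_of_injective (Embedding.induce (G := G) s).injective).symm

lemma dist_induce_eq_of_length_eq_dist (p : G.Walk u v) (hp : ∀ x ∈ p.support, x ∈ s)
    (hlen : p.length = G.dist u v) :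
    (G.induce s).dist ⟨u, hp u p.start_mem_support⟩ ⟨v, hp v p.end_mem_support⟩ =
      G.dist u v :=
  le_antisymm ((dist_le _).trans (by rw [length_induce, hlen]))
    ((p.induce s hp).reachable.dist_map_le (Embedding.induce s).toHom)

lemma internalCount_induce (p : G.Walk u v) (hp : ∀ x ∈ p.support, x ∈ s) (X : Finset V) :
    internalCount (p.induce s hp) (X.subtype (· ∈ s)) = internalCount p X := by
  have h := internalCount_map (Embedding.induce s).toHom (p.induce s hp)
    (X := X) (Y := X.subtype (· ∈ s)) (by simp)
  rw [map_induce] at h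
  exact h.symm

end Walk

end SimpleGraph

open SimpleGraph Walk in
theorem stmt1_general (G : SimpleGraph V) (k : ℕ)
    (W : Set V) (hW : GIsConvex G W) (S : Finset V)
    (hS : MutVis G S k) :
    MutVis (G.induce W) (S.subtype (· ∈ W)) k := by
  rintro ⟨u, hu⟩ huS ⟨v, hv⟩ hvS hne
  rw [Finset.mem_subtype] at huS hvS
  obtain ⟨p, hp, hlen, hcount⟩ := hS u huS v hvS fun h => hne (Subtype.ext h)
  have hpW := hW u hu v hv p hp hlen
  refine ⟨p.induce W hpW, (isPath_induce_iff p hpW).2 hp, ?_, ?_⟩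
  · rw [length_induce, dist_induce_eq_of_length_eq_dist p hpW hlen, hlen]
  · rwa [internalCount_induce]

theorem stmt1 [Fintype V] (G : SimpleGraph V) (hG : G.Connected) (k : ℕ)
    (W : Set V) (hW : GIsConvex G W) (S : Finset V) (hSW : ∀ x ∈ S, x ∈ W)
    (hS : MutVis G S k) :
    MutVis (G.induce W) (S.subtype (· ∈ W)) k :=
  stmt1_general G k W hW S hS
end

section
/- Let G be a graph, k ≥ 0, and H a convex subgraph of G. Then μ_k(H) ≤ μ_k(G). -/
open scoped Classical

variable {V : Type*}

/-! A mutual `k`-visible set of `G[W]` is still one in `G`: convexity makes distances in `G[W]`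
agree with those in `G`, so shortest paths of `G[W]` are shortest paths of `G`, and they have
the same internal vertices in the set. -/

open SimpleGraph

variable {G : SimpleGraph V} {W : Set V} {k : ℕ}

lemma internalCount_map {V' : Type*} {G' : SimpleGraph V'} (f : G ↪g G') {u v : V}
    (p : G.Walk u v) (X : Finset V) :
    internalCount (p.map f.toHom) (X.map f.toEmbedding) = internalCount p X := by
  unfold internalCount
  rw [Walk.support_map, ← List.map_tail, ← List.map_dropLast, List.countP_map]
  congr 1
  funext x
  simp [Finset.mem_map]

lemma Walk.length_induce {u v : V} (w : G.Walk u v) (hw : ∀ x ∈ w.support, x ∈ W) :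
    (w.induce W hw).length = w.length := by
  induction w <;> simp [*]

lemma GIsConvex.dist_induce (hW : GIsConvex G W) (u v : W) :
    (G.induce W).dist u v = G.dist u v := by
  by_cases hr : G.Reachable u v
  · obtain ⟨q, hq, hqlen⟩ := hr.exists_path_of_dist
    have hqW : ∀ x ∈ q.support, x ∈ W := hW u u.2 v v.2 q hq hqlen
    have hle : (G.induce W).dist u v ≤ G.dist u v :=
      hqlen ▸ Walk.length_induce q hqW ▸ dist_le (q.induce W hqW)
    obtain ⟨r, hrlen⟩ := Reachable.exists_walk_length_eq_dist ⟨q.induce W hqW⟩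
    have hge : G.dist u v ≤ (G.induce W).dist u v :=
      hrlen ▸ Walk.length_map _ r ▸ dist_le (r.map (Embedding.induce W).toHom)
    exact le_antisymm hle hge
  · have hr' : ¬(G.induce W).Reachable u v := fun h => hr (h.map (Embedding.induce W).toHom)
    rw [dist_eq_zero_of_not_reachable hr, dist_eq_zero_of_not_reachable hr']

lemma GIsConvex.mutVis_map_subtype (hW : GIsConvex G W) {X : Finset W} (hX : MutVis (G.induce W) X k) :
    MutVis G (X.map (Function.Embedding.subtype (· ∈ W))) k := by
  simp only [MutVis, Finset.mem_map]
  rintro _ ⟨u, hu, rfl⟩ _ ⟨v, hv, rfl⟩ huv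
  obtain ⟨p, hp, hplen, hpX⟩ := hX u hu v hv (ne_of_apply_ne _ huv)
  refine ⟨p.map (Embedding.induce W).toHom, hp.map (Embedding.induce (G := G) W).injective, ?_, ?_⟩
  · exact (Walk.length_map _ p).trans (hplen.trans (hW.dist_induce u v))
  · exact (internalCount_map (Embedding.induce W) p X).le.trans hpX

section muK

variable [Fintype V]

lemma bddAbove_card_mutVis (G : SimpleGraph V) (k : ℕ) :
    BddAbove {n | ∃ X : Finset V, MutVis G X k ∧ X.card = n} :=
  ⟨Fintype.card V, by rintro n ⟨X, -, rfl⟩; exact X.card_le_univ⟩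

lemma card_le_muK {X : Finset V} (hX : MutVis G X k) : X.card ≤ muK G k :=
  le_csSup (bddAbove_card_mutVis G k) ⟨X, hX, rfl⟩

lemma exists_mutVis_card_eq_muK (G : SimpleGraph V) (k : ℕ) :
    ∃ X : Finset V, MutVis G X k ∧ X.card = muK G k :=
  Nat.sSup_mem (s := {n | ∃ X : Finset V, MutVis G X k ∧ X.card = n})
    ⟨0, ∅, fun u hu => absurd hu (Finset.notMem_empty u), Finset.card_empty⟩
    (bddAbove_card_mutVis G k)

end muK

theorem stmt2_general [Fintype V] (G : SimpleGraph V) (k : ℕ)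
    (W : Set V) (hW : GIsConvex G W) :
    muK (G.induce W) k ≤ muK G k := by
  obtain ⟨X, hX, hcard⟩ := exists_mutVis_card_eq_muK (G.induce W) k
  rw [← hcard, ← X.card_map (Function.Embedding.subtype _)]
  exact card_le_muK (hW.mutVis_map_subtype hX)

theorem stmt2 [Fintype V] (G : SimpleGraph V) (hG : G.Connected) (k : ℕ)
    (W : Set V) (hW : GIsConvex G W) :
    muK (G.induce W) k ≤ muK G k :=
  stmt2_general G k W hW
end

section
/- Let G be a graph of order n and diameter d, and let k ≥ 0. Then μ_k(G) ≤ n − d + k + 1. -/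
open scoped Classical

variable {V : Type*}

/-!
Let `u, v` be at distance `d` and sort the vertices into the distance layers
`L_i = {w | dist u w = i}`, `0 ≤ i ≤ d`, all of which are nonempty. A layer not contained in `X`
contains a vertex outside `X`, so at most `n - |X|` layers are not contained in `X`. If `k + 3`
layers were contained in `X`, take `x` in the lowest and `y` in the highest of them: every walk
from `x` to `y` meets every layer in between, so it has at least `k + 1` internal vertices in `X`.
Hence `d + 1 ≤ (n - |X|) + (k + 2)`.
-/

open Finset

namespace SimpleGraph

variable {G : SimpleGraph V}

lemma dist_le_dist_add_one_of_adj (u : V) ⦃v w : V⦄ (h : G.Adj v w) :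
    G.dist u w ≤ G.dist u v + 1 := by
  rcases h.diff_dist_adj (u := u) with h | h | h <;> omega

lemma Walk.exists_mem_support_eq_of_le_of_le {f : V → ℕ}
    (hf : ∀ ⦃a b⦄, G.Adj a b → f b ≤ f a + 1) {ℓ : ℕ} :
    ∀ {x y : V} (p : G.Walk x y), f x ≤ ℓ → ℓ ≤ f y → ∃ w ∈ p.support, f w = ℓ
  | _, _, .nil, hx, hy => ⟨_, List.mem_singleton_self _, le_antisymm hx hy⟩
  | x, _, .cons h q, hx, hy => by
    rcases hx.eq_or_lt with hx | hx
    · exact ⟨x, List.mem_cons_self, hx⟩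
    · obtain ⟨w, hw, hfw⟩ := q.exists_mem_support_eq_of_le_of_le hf (by have := hf h; omega) hy
      exact ⟨w, List.mem_cons_of_mem _ hw, hfw⟩

lemma exists_dist_eq_of_le_dist {u v : V} {i : ℕ} (hi : i ≤ G.dist u v) :
    ∃ w, G.dist u w = i := by
  rcases Nat.eq_zero_or_pos (G.dist u v) with h | h
  · exact ⟨u, by rw [dist_self]; omega⟩
  · obtain ⟨p, -⟩ := exists_walk_of_dist_ne_zero h.ne'
    obtain ⟨w, -, hw⟩ :=
      p.exists_mem_support_eq_of_le_of_le (dist_le_dist_add_one_of_adj u) (by simp) hi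
    exact ⟨w, hw⟩

lemma Walk.mem_support_tail_dropLast {x y w : V} (p : G.Walk x y) (hw : w ∈ p.support)
    (hx : w ≠ x) (hy : w ≠ y) : w ∈ p.support.tail.dropLast := by
  have hw' : w ∈ p.support.tail := by
    rw [← p.cons_tail_support] at hw
    exact (List.mem_cons.mp hw).resolve_left hx
  refine List.mem_dropLast_of_mem_of_ne_getLast hw' ?_
  rwa [List.getLast_tail, p.getLast_support]

lemma card_filter_mem_support_le_internalCount {x y : V} (p : G.Walk x y) (X : Finset V) :
    #{w ∈ X | w ∈ p.support ∧ w ≠ x ∧ w ≠ y} ≤ internalCount p X :=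
  calc #{w ∈ X | w ∈ p.support ∧ w ≠ x ∧ w ≠ y}
      ≤ #(p.support.tail.dropLast.filter (· ∈ X)).toFinset := by
        refine card_le_card fun w hw => ?_
        obtain ⟨hwX, hw, hx, hy⟩ := mem_filter.mp hw
        simp [p.mem_support_tail_dropLast hw hx hy, hwX]
    _ ≤ (p.support.tail.dropLast.filter (· ∈ X)).length := List.toFinset_card_le _
    _ = internalCount p X := List.countP_eq_length_filter.symm

lemma card_filter_exists_dist_eq_notMem_le [Fintype V] (u : V) (X : Finset V) (s : Finset ℕ) :
    #{i ∈ s | ∃ w, G.dist u w = i ∧ w ∉ X} ≤ #Xᶜ :=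
  calc #{i ∈ s | ∃ w, G.dist u w = i ∧ w ∉ X}
      ≤ #(Xᶜ.image (G.dist u)) := card_le_card fun i hi => by
        obtain ⟨w, rfl, hw⟩ := (mem_filter.mp hi).2
        exact mem_image_of_mem _ (mem_compl.mpr hw)
    _ ≤ #Xᶜ := card_image_le

end SimpleGraph

namespace MutVis

open SimpleGraph

variable {G : SimpleGraph V} {X : Finset V} {k : ℕ}

lemma card_le_of_forall_dist_eq_mem (hX : MutVis G X k) (u : V) {F : Finset ℕ}
    (hne : ∀ i ∈ F, ∃ w, G.dist u w = i) (hsub : ∀ i ∈ F, ∀ w, G.dist u w = i → w ∈ X) :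
    #F ≤ k + 2 := by
  by_contra! hF
  have hFne : F.Nonempty := card_pos.mp (by omega)
  set a := F.min' hFne
  set b := F.max' hFne
  have hab : a < b := F.min'_lt_max'_of_card (by omega)
  obtain ⟨x, hx⟩ := hne a (F.min'_mem hFne)
  obtain ⟨y, hy⟩ := hne b (F.max'_mem hFne)
  obtain ⟨p, -, -, hp⟩ := hX x (hsub a (F.min'_mem hFne) x hx) y (hsub b (F.max'_mem hFne) y hy)
    (by rintro rfl; omega)
  have hF_sub : F ⊆ insert a (insert b {i ∈ F | a < i ∧ i < b}) := fun i hi => by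
    have := F.min'_le i hi
    have := F.le_max' i hi
    simp only [mem_insert, mem_filter, hi, true_and]
    omega
  have hmid_sub : {i ∈ F | a < i ∧ i < b} ⊆
      {w ∈ X | w ∈ p.support ∧ w ≠ x ∧ w ≠ y}.image (G.dist u) := fun i hi => by
    obtain ⟨hiF, hai, hib⟩ := mem_filter.mp hi
    obtain ⟨w, hw, rfl⟩ := p.exists_mem_support_eq_of_le_of_le
      (dist_le_dist_add_one_of_adj u) (hx ▸ hai.le) (hy ▸ hib.le)
    exact mem_image_of_mem _ (mem_filter.mpr
      ⟨hsub _ hiF w rfl, hw, by rintro rfl; omega, by rintro rfl; omega⟩)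
  have : #F ≤ internalCount p X + 2 :=
    calc #F ≤ #{i ∈ F | a < i ∧ i < b} + 2 := by
          grw [card_le_card hF_sub, card_insert_le, card_insert_le]
      _ ≤ #{w ∈ X | w ∈ p.support ∧ w ≠ x ∧ w ≠ y} + 2 := by
          grw [card_le_card hmid_sub, card_image_le]
      _ ≤ internalCount p X + 2 := by grw [card_filter_mem_support_le_internalCount]
  omega

lemma card_le_card_sub_dist_add [Fintype V] (hX : MutVis G X k) (u v : V) :
    #X ≤ Fintype.card V - G.dist u v + k + 1 := by
  have hfull : #{i ∈ range (G.dist u v + 1) | ∀ w, G.dist u w = i → w ∈ X} ≤ k + 2 :=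
    hX.card_le_of_forall_dist_eq_mem u
      (fun i hi => exists_dist_eq_of_le_dist (Nat.le_of_lt_succ (mem_range.mp (mem_filter.mp hi).1)))
      (fun i hi => (mem_filter.mp hi).2)
  have hnotfull :
      #{i ∈ range (G.dist u v + 1) | ¬∀ w, G.dist u w = i → w ∈ X} ≤ Fintype.card V - #X := by
    simpa [card_compl] using card_filter_exists_dist_eq_notMem_le u X (range (G.dist u v + 1))
  have hsplit := card_filter_add_card_filter_not (s := range (G.dist u v + 1))
    fun i => ∀ w, G.dist u w = i → w ∈ X
  rw [card_range] at hsplit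
  have := X.card_le_univ
  omega

end MutVis

lemma muK_le_of_forall_card_le [Fintype V] {G : SimpleGraph V} {k m : ℕ}
    (h : ∀ X, MutVis G X k → #X ≤ m) : muK G k ≤ m :=
  csSup_le ⟨0, ∅, fun _ hu => absurd hu (notMem_empty _), card_empty⟩
    (by rintro _ ⟨X, hX, rfl⟩; exact h X hX)

theorem stmt7_general [Fintype V] (G : SimpleGraph V) (k : ℕ) :
    muK G k ≤ Fintype.card V - G.diam + k + 1 := by
  refine muK_le_of_forall_card_le fun X hX => ?_
  cases isEmpty_or_nonempty V
  · simp [X.eq_empty_of_isEmpty]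
  · obtain ⟨u, v, huv⟩ := G.exists_dist_eq_diam
    exact huv ▸ hX.card_le_card_sub_dist_add u v

theorem stmt7 [Fintype V] (G : SimpleGraph V) (hG : G.Connected) (k : ℕ) :
    muK G k ≤ Fintype.card V - G.diam + k + 1 :=
  stmt7_general G k
end

section
/- Let G be a connected graph with diameter d. Then μ_k(G) = |V(G)| if and only if k ≥ d − 1. -/
open scoped Classical

variable {V : Type*}

/-! When `X = V(G)`, every internal vertex of a path counts, so a shortest `u`-`v` path has
`dist u v - 1` internal vertices in `X`; hence `V(G)` is mutual `k`-visible iff `diam - 1 ≤ k`. -/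

namespace SimpleGraph

variable [Fintype V] {G : SimpleGraph V}

lemma internalCount_univ {u v : V} (p : G.Walk u v) :
    internalCount p Finset.univ = p.length - 1 := by
  unfold internalCount
  rw [List.countP_eq_length.mpr (by simp)]
  simp [Walk.length_support]

lemma diam_sub_one_le_of_mutVis_univ {k : ℕ} (h : MutVis G Finset.univ k) : G.diam - 1 ≤ k := by
  rcases eq_or_ne G.diam 0 with hd | hd
  · simp [hd]
  have : Nonempty V := (nontrivial_of_diam_ne_zero hd).to_nonempty
  obtain ⟨u, v, huv⟩ := G.exists_dist_eq_diam
  have hne : u ≠ v := by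
    rintro rfl
    exact hd (by simpa using huv.symm)
  obtain ⟨p, -, hlen, hcount⟩ := h u (Finset.mem_univ u) v (Finset.mem_univ v) hne
  rwa [internalCount_univ, hlen, huv] at hcount

lemma Connected.mutVis_univ_of_diam_sub_one_le (hG : G.Connected) {k : ℕ} (hk : G.diam - 1 ≤ k) :
    MutVis G Finset.univ k := by
  have : Nonempty V := hG.nonempty
  intro u _ v _ _
  obtain ⟨p, hp, hlen⟩ := hG.exists_path_of_dist u v
  refine ⟨p, hp, hlen, ?_⟩
  have := G.dist_le_diam (connected_iff_ediam_ne_top.mp hG) (u := u) (v := v)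
  rw [internalCount_univ, hlen]
  omega

lemma muK_eq_card_iff (G : SimpleGraph V) (k : ℕ) :
    muK G k = Fintype.card V ↔ MutVis G Finset.univ k := by
  set S := {n | ∃ X : Finset V, MutVis G X k ∧ X.card = n}
  have hS_le : ∀ n ∈ S, n ≤ Fintype.card V := by
    rintro n ⟨X, -, rfl⟩
    exact X.card_le_univ
  have hS_nonempty : S.Nonempty := ⟨0, ∅, by simp [MutVis], rfl⟩
  constructor
  · intro h
    obtain ⟨X, hX, hcard⟩ : Fintype.card V ∈ S := h ▸ Nat.sSup_mem hS_nonempty ⟨_, hS_le⟩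
    rwa [Finset.eq_univ_of_card X hcard] at hX
  · intro h
    exact le_antisymm (csSup_le hS_nonempty hS_le) (le_csSup ⟨_, hS_le⟩ ⟨_, h, Finset.card_univ⟩)

end SimpleGraph

theorem stmt8 [Fintype V] (G : SimpleGraph V) (hG : G.Connected) (k : ℕ) :
    muK G k = Fintype.card V ↔ G.diam - 1 ≤ k :=
  (G.muK_eq_card_iff k).trans
    ⟨SimpleGraph.diam_sub_one_le_of_mutVis_univ, hG.mutVis_univ_of_diam_sub_one_le⟩
end

section
/- Let G be a graph of order n containing a cycle, with girth g, and let k ≥ 0. Then μ_k(G) ≤ n − g + 2k + 3. -/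
open scoped Classical

variable {V : Type*}

/-!
Let `C` be a shortest cycle, of length `g`. Two distinct paths with the same ends close up a
cycle, so their lengths add up to at least `g`, and to at least `g + 2` if they also share an
inner vertex. If `u, v ∈ X` are joined by an arc of `C` carrying more than `k` inner vertices of
`X`, the shortest `u`-`v` path granted by mutual visibility is a different path, so the arc has
length at least `g / 2`. Cutting `C` at its vertices in `X` then shows that `C` carries at most
`2k + 4` of them. In the extremal case there are `u, v ∈ X` cutting `C` into two halves with
`k + 1` inner vertices of `X` each; the granted shortest path then has length `g / 2`, so it has
an inner vertex outside `X`, and that vertex cannot lie on `C`; so then `|X \ C| ≤ n - g - 1`.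
-/

namespace SimpleGraph

variable {G : SimpleGraph V}

open Walk

theorem girth_le_length_add_length {u v : V} {p q : G.Walk u v} (hp : p.IsPath)
    (hq : q.IsPath) (hne : p ≠ q) : G.girth ≤ p.length + q.length := by
  obtain ⟨_, -, -, c, hc, hlen⟩ := hp.exists_isCycle_length_le_add_of_ne hq hne
  exact (girth_le_length hc).trans hlen

theorem girth_add_two_le_length_add_length {u v x : V} {p q : G.Walk u v} (hp : p.IsPath)
    (hq : q.IsPath) (hne : p ≠ q) (hxp : x ∈ p.support) (hxq : x ∈ q.support) (hxu : x ≠ u)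
    (hxv : x ≠ v) : G.girth + 2 ≤ p.length + q.length := by
  have hp_len := congrArg length (p.take_spec hxp)
  have hq_len := congrArg length (q.take_spec hxq)
  have := length_takeUntil_lt_length hxp hxv
  have := length_takeUntil_lt_length hxq hxv
  have := length_dropUntil_lt_length hxp hxu
  have := length_dropUntil_lt_length hxq hxu
  rw [length_append] at hp_len hq_len
  by_cases htake : p.takeUntil x hxp = q.takeUntil x hxq
  · have hdrop : p.dropUntil x hxp ≠ q.dropUntil x hxq := fun hdrop =>
      hne (by rw [← p.take_spec hxp, ← q.take_spec hxq, htake, hdrop])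
    have := girth_le_length_add_length (hp.dropUntil hxp) (hq.dropUntil hxq) hdrop
    omega
  · have := girth_le_length_add_length (hp.takeUntil hxp) (hq.takeUntil hxq) htake
    omega

namespace Walk

/-- Unlike `internalCount`, this count is additive along `Walk.append`. -/
noncomputable def tailCount {u v : V} (p : G.Walk u v) (X : Finset V) : ℕ :=
  p.support.tail.countP (fun x => decide (x ∈ X))

variable {X : Finset V}

theorem internalCount_reverse {u v : V} (p : G.Walk u v) :
    internalCount p.reverse X = internalCount p X := by
  simp [internalCount, support_reverse, List.tail_reverse, List.dropLast_reverse,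
    List.countP_reverse, List.tail_dropLast]

theorem internalCount_le_length_sub_one {u v : V} (p : G.Walk u v) :
    internalCount p X ≤ p.length - 1 :=
  List.countP_le_length.trans (by simp)

theorem IsPath.exists_internal_notMem {u v : V} {p : G.Walk u v} (hp : p.IsPath)
    (h : internalCount p X < p.length - 1) :
    ∃ z ∈ p.support, z ≠ u ∧ z ≠ v ∧ z ∉ X := by
  obtain ⟨z, hz, hzX⟩ : ∃ z ∈ p.support.tail.dropLast, z ∉ X := by
    by_contra! hall
    have hcount : internalCount p X = p.support.tail.dropLast.length :=
      List.countP_eq_length.mpr (by simpa using hall)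
    exact h.ne (by simpa using hcount)
  have hzt : z ∈ p.support.tail := List.dropLast_subset _ hz
  have hzd : z ∈ p.support.dropLast := List.tail_subset _ (List.tail_dropLast ▸ hz)
  refine ⟨z, List.tail_subset _ hzt, ?_, ?_, hzX⟩
  · rintro rfl
    exact (p.cons_tail_support ▸ hp.support_nodup).notMem hzt
  · rintro rfl
    have hnd := p.dropLast_support_concat ▸ hp.support_nodup
    exact (List.nodup_append.mp hnd).2.2 _ hzd _ (List.mem_singleton_self _) rfl

theorem tailCount_append {u v w : V} (p : G.Walk u v) (q : G.Walk v w) :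
    (p.append q).tailCount X = p.tailCount X + q.tailCount X := by
  simp [tailCount, tail_support_append, List.countP_append]

theorem not_nil_of_tailCount_pos {u v : V} {p : G.Walk u v} (h : 0 < p.tailCount X) :
    ¬ p.Nil := by
  cases p with
  | nil => simp [tailCount] at h
  | cons => simp

theorem tailCount_cons {u a v : V} (h : G.Adj u a) (p : G.Walk a v) :
    (cons h p).tailCount X = p.tailCount X + if a ∈ X then 1 else 0 := by
  rw [tailCount, support_cons, List.tail_cons, ← p.cons_tail_support, List.countP_cons]
  simp [tailCount]

theorem tailCount_eq_internalCount_add_one {u v : V} {p : G.Walk u v} (hp : ¬ p.Nil)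
    (hv : v ∈ X) : p.tailCount X = internalCount p X + 1 := by
  rw [tailCount, internalCount, ← support_tail_of_not_nil p hp]
  nth_rw 1 [← p.tail.dropLast_support_concat]
  rw [List.countP_append]
  simp [hv]

theorem exists_append_tailCount_eq {u v : V} (w : G.Walk u v) {j : ℕ}
    (hj : j < w.tailCount X) :
    ∃ x ∈ X, ∃ (p : G.Walk u x) (q : G.Walk x v),
      w = p.append q ∧ p.tailCount X = j + 1 := by
  induction w generalizing j with
  | nil => simp [tailCount] at hj
  | @cons u a v h w ih =>
    rw [tailCount_cons] at hj
    by_cases ha : a ∈ X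
    · rw [if_pos ha] at hj
      rcases j with _ | j
      · exact ⟨a, ha, cons h nil, w, rfl, by simp [tailCount, ha]⟩
      · obtain ⟨x, hx, p, q, rfl, hp⟩ := ih (j := j) (by omega)
        exact ⟨x, hx, cons h p, q, rfl, by rw [tailCount_cons, hp, if_pos ha]⟩
    · rw [if_neg ha, add_zero] at hj
      obtain ⟨x, hx, p, q, rfl, hp⟩ := ih hj
      exact ⟨x, hx, cons h p, q, rfl, by rw [tailCount_cons, hp, if_neg ha, add_zero]⟩

theorem toFinset_support_tail_of_not_nil {u : V} {c : G.Walk u u} (hc : ¬ c.Nil) :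
    c.support.tail.toFinset = c.support.toFinset := by
  conv_rhs => rw [← c.cons_tail_support, List.toFinset_cons]
  rw [Finset.insert_eq_of_mem]
  exact List.mem_toFinset.mpr (c.end_mem_tail_support hc)

theorem IsCycle.card_toFinset_support {u : V} {c : G.Walk u u} (hc : c.IsCycle) :
    c.support.toFinset.card = c.length := by
  rw [← toFinset_support_tail_of_not_nil hc.not_nil,
    List.toFinset_card_of_nodup hc.support_nodup]
  simp

theorem IsCycle.tailCount_eq_card_inter {u : V} {c : G.Walk u u} (hc : c.IsCycle) :
    c.tailCount X = (X ∩ c.support.toFinset).card := by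
  rw [← toFinset_support_tail_of_not_nil hc.not_nil, tailCount, List.countP_eq_length_filter,
    ← List.toFinset_card_of_nodup (hc.support_nodup.filter _), List.toFinset_filter]
  congr 1
  ext
  simp [and_comm]

end Walk

end SimpleGraph

namespace MutVis

open SimpleGraph SimpleGraph.Walk

variable {G : SimpleGraph V} {X : Finset V} {k : ℕ}

theorem girth_le_two_mul_length (hX : MutVis G X k) {u v : V} (hu : u ∈ X) (hv : v ∈ X)
    (huv : u ≠ v) {A : G.Walk u v} (hA : A.IsPath) (hk : k < internalCount A X) :
    G.girth ≤ 2 * A.length := by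
  obtain ⟨P, hP, hPlen, hPk⟩ := hX u hu v hv huv
  have hne : P ≠ A := by rintro rfl; omega
  have := girth_le_length_add_length hP hA hne
  have : P.length ≤ A.length := hPlen ▸ G.dist_le A
  omega

theorem girth_le_two_mul_length_of_tailCount (hX : MutVis G X k) {u v : V} (hu : u ∈ X)
    (hv : v ∈ X) {A : G.Walk u v} (hA : A.IsPath) (hk : k + 2 ≤ A.tailCount X) :
    G.girth ≤ 2 * A.length := by
  have hnil : ¬ A.Nil := not_nil_of_tailCount_pos (X := X) (by omega)
  rw [tailCount_eq_internalCount_add_one hnil hv] at hk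
  exact hX.girth_le_two_mul_length hu hv (mt hA.nil_iff_eq.mpr hnil) hA (by omega)

theorem tailCount_le_of_isCycle (hX : MutVis G X k) {u : V} (hu : u ∈ X) {c : G.Walk u u}
    (hc : c.IsCycle) (hg : c.length = G.girth) : c.tailCount X ≤ 2 * k + 4 := by
  by_contra! hm
  obtain ⟨v, hv, A, B, rfl, hA⟩ :=
    c.exists_append_tailCount_eq (X := X) (j := k + 1) (by omega)
  rw [tailCount_append] at hm
  obtain ⟨w, hw, B₁, B₂, rfl, hB₁⟩ :=
    B.exists_append_tailCount_eq (X := X) (j := 0) (by omega)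
  rw [tailCount_append] at hm
  have hApath := hc.isPath_of_append_left
    (not_nil_of_tailCount_pos (X := X) (by rw [tailCount_append]; omega))
  rw [append_assoc] at hc
  have hB₂path := hc.isPath_of_append_right
    (not_nil_of_tailCount_pos (X := X) (by rw [tailCount_append]; omega))
  have hgA := hX.girth_le_two_mul_length_of_tailCount hu hv hApath (by omega)
  have hgB₂ := hX.girth_le_two_mul_length_of_tailCount hw hu hB₂path (by omega)
  have hB₁pos : 0 < B₁.length :=
    not_nil_iff_lt_length.mp (not_nil_of_tailCount_pos (X := X) (by omega))
  simp only [length_append] at hg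
  omega

theorem exists_notMem_of_isCycle (hX : MutVis G X k) {u : V} (hu : u ∈ X) {c : G.Walk u u}
    (hc : c.IsCycle) (hg : c.length = G.girth) (hm : c.tailCount X = 2 * k + 4) :
    ∃ z ∉ X, z ∉ c.support := by
  obtain ⟨v, hv, A, B, rfl, hA⟩ :=
    c.exists_append_tailCount_eq (X := X) (j := k + 1) (by omega)
  rw [tailCount_append, hA] at hm
  have hAnil : ¬ A.Nil := not_nil_of_tailCount_pos (X := X) (by omega)
  have hBnil : ¬ B.Nil := not_nil_of_tailCount_pos (X := X) (by omega)
  have hApath := hc.isPath_of_append_left hBnil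
  have hBpath := (hc.isPath_of_append_right hAnil).reverse
  have huv : u ≠ v := mt hApath.nil_iff_eq.mpr hAnil
  rw [tailCount_eq_internalCount_add_one hAnil hv] at hA
  rw [tailCount_eq_internalCount_add_one hBnil hu, ← internalCount_reverse] at hm
  have hgA := hX.girth_le_two_mul_length hu hv huv hApath (by omega)
  have hgB := hX.girth_le_two_mul_length hu hv huv hBpath (by omega)
  rw [length_append] at hg
  rw [length_reverse] at hgB
  obtain ⟨P, hP, hPlen, hPk⟩ := hX u hu v hv huv
  have hPA : P ≠ A := by rintro rfl; omega
  have hPB : P ≠ B.reverse := by rintro rfl; omega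
  have hPle : P.length ≤ A.length := hPlen ▸ G.dist_le A
  have := girth_le_length_add_length hP hApath hPA
  have := internalCount_le_length_sub_one A (X := X)
  obtain ⟨z, hzP, hzu, hzv, hzX⟩ := hP.exists_internal_notMem (X := X) (by omega)
  refine ⟨z, hzX, fun hzc => ?_⟩
  rcases (mem_support_append_iff A B).mp hzc with hzA | hzB
  · have := girth_add_two_le_length_add_length hP hApath hPA hzP hzA hzu hzv
    omega
  · have := girth_add_two_le_length_add_length hP hBpath hPB hzP (by simpa using hzB) hzu hzv
    rw [length_reverse] at this
    omega

theorem card_le_of_isCycle [Fintype V] (hX : MutVis G X k) {a : V} {c : G.Walk a a}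
    (hc : c.IsCycle) (hg : c.length = G.girth) :
    X.card ≤ Fintype.card V - G.girth + 2 * k + 3 := by
  set C := c.support.toFinset
  have hC : C.card = G.girth := hg ▸ hc.card_toFinset_support
  have hXC := Finset.card_inter_add_card_sdiff X C
  have hsdiff : X \ C ⊆ Cᶜ := fun x hx => Finset.mem_compl.mpr (Finset.mem_sdiff.mp hx).2
  have hcompl := Finset.card_le_card hsdiff
  rw [Finset.card_compl, hC] at hcompl
  by_cases hsmall : (X ∩ C).card ≤ 2 * k + 3
  · omega
  obtain ⟨u, hu⟩ := Finset.card_pos.mp (by omega : 0 < (X ∩ C).card)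
  rw [Finset.mem_inter, List.mem_toFinset] at hu
  have hc' : (c.rotate u hu.2).IsCycle := hc.rotate hu.2
  have hg' : (c.rotate u hu.2).length = G.girth := by rw [length_rotate, hg]
  have hC' : (c.rotate u hu.2).support.toFinset = C := by ext; simp [C]
  have hm := hc'.tailCount_eq_card_inter (X := X)
  rw [hC'] at hm
  have := hX.tailCount_le_of_isCycle hu.1 hc' hg'
  obtain ⟨z, hzX, hzc⟩ := hX.exists_notMem_of_isCycle hu.1 hc' hg' (by omega)
  have hzC : z ∉ C := by simpa [C] using hzc
  have hsdiff' : X \ C ⊆ (insert z C)ᶜ := fun x => by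
    simp only [Finset.mem_compl, Finset.mem_insert, Finset.mem_sdiff]
    grind
  have hcompl' := Finset.card_le_card hsdiff'
  rw [Finset.card_compl, Finset.card_insert_of_notMem hzC, hC] at hcompl'
  have := Finset.card_le_univ (insert z C)
  rw [Finset.card_insert_of_notMem hzC, hC] at this
  omega

end MutVis

theorem stmt9_general [Fintype V] (G : SimpleGraph V) (hcyc : ¬ G.IsAcyclic)
    (k : ℕ) :
    muK G k ≤ Fintype.card V - G.girth + 2 * k + 3 := by
  obtain ⟨a, c, hc, hg⟩ := SimpleGraph.exists_girth_eq_length.mpr hcyc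
  refine csSup_le ⟨0, ∅, by simp [MutVis], rfl⟩ ?_
  rintro _ ⟨X, hX, rfl⟩
  exact hX.card_le_of_isCycle hc hg.symm

theorem stmt9 [Fintype V] (G : SimpleGraph V) (hG : G.Connected) (hcyc : ¬ G.IsAcyclic)
    (k : ℕ) :
    muK G k ≤ Fintype.card V - G.girth + 2 * k + 3 :=
  stmt9_general G hcyc k
end

section
/- Let G be a graph of order n and k ≥ 0. If G contains an isometric path with ℓ + 1 vertices (i.e., of length ℓ), then μ_k(G) ≤ n − ℓ + k + 1. -/
open scoped Classical

variable {V : Type*}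

/-
A geodesic `x`–`y` path `p` with `l + 1` vertices can be rerouted so that it meets a mutual
`k`-visible set `X` in at most `k + 2` vertices: replace the segment of `p` between its first and
last vertex in `X` by a shortest path having at most `k` internal vertices in `X`. The new walk is
no longer than `p`, hence again a geodesic, hence a path with `l + 1` vertices, at most `k + 2` of
them in `X`; all other vertices of `X` lie among the remaining `n - l - 1` vertices of `G`.
-/

open Finset

lemma Finset.card_le_card_compl_add_of_card_inter_le {α : Type*} [Fintype α] [DecidableEq α]
    {X S : Finset α} {m : ℕ} (h : #(X ∩ S) ≤ m) : #X ≤ Fintype.card α - #S + m := by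
  have hsdiff : #(X \ S) ≤ Fintype.card α - #S :=
    (card_compl S) ▸ card_le_card fun w hw => mem_compl.2 (mem_sdiff.1 hw).2
  have := card_inter_add_card_sdiff X S
  omega

lemma List.card_inter_toFinset_le_countP {α : Type*} [DecidableEq α] (X : Finset α)
    (L : List α) : #(X ∩ L.toFinset) ≤ L.countP (· ∈ X) := by
  rw [List.countP_eq_length_filter]
  refine (card_le_card fun w hw => ?_).trans (L.filter (· ∈ X)).toFinset_card_le
  simp_all

namespace SimpleGraph.Walk

variable {G : SimpleGraph V} {u v w x y : V}

lemma eq_or_eq_or_mem_internal_of_mem_support (q : G.Walk u v) (hw : w ∈ q.support) :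
    w = u ∨ w = v ∨ w ∈ q.support.tail.dropLast := by
  rw [← q.cons_tail_support, List.mem_cons] at hw
  rcases hw with rfl | hw
  · exact .inl rfl
  · have hne : q.support.tail ≠ [] := List.ne_nil_of_mem hw
    rw [← List.dropLast_append_getLast hne, List.mem_append, List.mem_singleton,
      List.getLast_tail, getLast_support] at hw
    tauto

lemma dist_getVert_le (p : G.Walk x y) {a b : ℕ} (hab : a ≤ b) :
    G.dist (p.getVert a) (p.getVert b) ≤ b - a := by
  calc G.dist (p.getVert a) (p.getVert b)
      = G.dist (p.getVert a) ((p.drop a).getVert (b - a)) := by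
        rw [drop_getVert, Nat.add_sub_cancel' hab]
    _ ≤ ((p.drop a).take (b - a)).length := dist_le _
    _ ≤ b - a := by simp

lemma eq_getVert_of_mem_support_take {X : Finset V} {p : G.Walk x y} {a : ℕ}
    (hfirst : ∀ i ≤ p.length, p.getVert i ∈ X → a ≤ i)
    (hw : w ∈ (p.take a).support) (hwX : w ∈ X) : w = p.getVert a := by
  obtain ⟨i, rfl, hi⟩ := mem_support_iff_exists_getVert.mp hw
  rw [take_getVert] at hwX ⊢
  rw [take_length] at hi
  have := hfirst (a ⊓ i) (by omega) hwX
  congr 1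
  omega

lemma eq_getVert_of_mem_support_drop {X : Finset V} {p : G.Walk x y} {b : ℕ}
    (hb : b ≤ p.length) (hlast : ∀ i ≤ p.length, p.getVert i ∈ X → i ≤ b)
    (hw : w ∈ (p.drop b).support) (hwX : w ∈ X) : w = p.getVert b := by
  obtain ⟨j, rfl, hj⟩ := mem_support_iff_exists_getVert.mp hw
  rw [drop_getVert] at hwX ⊢
  rw [drop_length] at hj
  have := hlast (b + j) (by omega) hwX
  congr 1
  omega

end SimpleGraph.Walk

open SimpleGraph Walk

section MutVis

variable {G : SimpleGraph V} {X : Finset V} {k : ℕ} {x y : V}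

lemma MutVis.exists_isPath_card_inter_support_le_of_first_last (hX : MutVis G X k)
    {p : G.Walk x y} (hp : p.length = G.dist x y) {a b : ℕ} (hab : a < b) (hb : b ≤ p.length)
    (haX : p.getVert a ∈ X) (hbX : p.getVert b ∈ X)
    (hfirst : ∀ i ≤ p.length, p.getVert i ∈ X → a ≤ i)
    (hlast : ∀ i ≤ p.length, p.getVert i ∈ X → i ≤ b) :
    ∃ q : G.Walk x y, q.IsPath ∧ q.length = p.length ∧ #(X ∩ q.support.toFinset) ≤ k + 2 := by
  have hne : p.getVert a ≠ p.getVert b := fun h => hab.ne <|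
    (p.isPath_of_length_eq_dist hp).getVert_injOn (hab.le.trans hb : a ≤ p.length) hb h
  obtain ⟨r, -, hr, hrX⟩ := hX _ haX _ hbX hne
  set q := (p.take a).append (r.append (p.drop b))
  have hq : q.length = G.dist x y := by
    refine le_antisymm ?_ (dist_le q)
    have := p.dist_getVert_le hab.le
    simp only [q, length_append, take_length, drop_length]
    omega
  refine ⟨q, q.isPath_of_length_eq_dist hq, hq.trans hp.symm, ?_⟩
  calc #(X ∩ q.support.toFinset)
      ≤ #((X ∩ r.support.tail.dropLast.toFinset) ∪ {p.getVert a, p.getVert b}) :=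
        card_le_card fun w hw => by
          obtain ⟨hwX, hwq⟩ := mem_inter.1 hw
          simp only [q, List.mem_toFinset, mem_support_append_iff] at hwq
          simp only [mem_union, mem_insert, mem_singleton, mem_inter, List.mem_toFinset]
          rcases hwq with hw | hw | hw
          · exact .inr (.inl (eq_getVert_of_mem_support_take hfirst hw hwX))
          · rcases r.eq_or_eq_or_mem_internal_of_mem_support hw with h | h | h <;> tauto
          · exact .inr (.inr (eq_getVert_of_mem_support_drop hb hlast hw hwX))
    _ ≤ k + 2 := (card_union_le _ _).trans
        (add_le_add ((List.card_inter_toFinset_le_countP _ _).trans hrX) card_le_two)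

theorem MutVis.exists_isPath_card_inter_support_le (hX : MutVis G X k) (p : G.Walk x y)
    (hp : p.length = G.dist x y) :
    ∃ q : G.Walk x y, q.IsPath ∧ q.length = p.length ∧ #(X ∩ q.support.toFinset) ≤ k + 2 := by
  set I := (range (p.length + 1)).filter (p.getVert · ∈ X)
  have hmem : ∀ i, i ∈ I ↔ i ≤ p.length ∧ p.getVert i ∈ X := by simp [I]
  by_cases hI : #I ≤ 1
  · refine ⟨p, p.isPath_of_length_eq_dist hp, rfl, ?_⟩
    calc #(X ∩ p.support.toFinset) ≤ #(I.image p.getVert) := card_le_card fun w hw => by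
          obtain ⟨hwX, hwp⟩ := mem_inter.1 hw
          obtain ⟨i, rfl, hi⟩ := mem_support_iff_exists_getVert.mp (List.mem_toFinset.1 hwp)
          exact mem_image_of_mem _ ((hmem i).2 ⟨hi, hwX⟩)
      _ ≤ #I := card_image_le
      _ ≤ k + 2 := by omega
  have hIne : I.Nonempty := card_pos.1 (by omega)
  obtain ⟨-, haX⟩ := (hmem _).1 (I.min'_mem hIne)
  obtain ⟨hb, hbX⟩ := (hmem _).1 (I.max'_mem hIne)
  exact hX.exists_isPath_card_inter_support_le_of_first_last hp
    (min'_lt_max'_of_card I (by omega)) hb haX hbX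
    (fun i hi hiX => I.min'_le i ((hmem i).2 ⟨hi, hiX⟩))
    (fun i hi hiX => I.le_max' i ((hmem i).2 ⟨hi, hiX⟩))

end MutVis

theorem stmt10_general [Fintype V] (G : SimpleGraph V) (k : ℕ)
    {x y : V} (p : G.Walk x y) (l : ℕ) (hlen : p.length = l)
    (hiso : ∀ i j : Fin p.support.length,
      G.dist (p.support.get i) (p.support.get j) = ((i : ℤ) - (j : ℤ)).natAbs) :
    muK G k ≤ Fintype.card V - l + k + 1 := by
  have hgeo : p.length = G.dist x y := by
    simpa [support_getElem_eq_getVert] using (hiso ⟨0, by simp⟩ ⟨p.length, by simp⟩).symm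
  refine csSup_le' ?_
  rintro _ ⟨X, hX, rfl⟩
  obtain ⟨q, hq, hql, hqX⟩ := hX.exists_isPath_card_inter_support_le p hgeo
  have hcard : #q.support.toFinset = l + 1 := by
    rw [List.toFinset_card_of_nodup hq.support_nodup, length_support, hql, hlen]
  have := card_le_card_compl_add_of_card_inter_le hqX
  have := card_le_univ q.support.toFinset
  omega

theorem stmt10 [Fintype V] (G : SimpleGraph V) (hG : G.Connected) (k : ℕ)
    {x y : V} (p : G.Walk x y) (hp : p.IsPath) (l : ℕ) (hlen : p.length = l)
    (hiso : ∀ i j : Fin p.support.length,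
      G.dist (p.support.get i) (p.support.get j) = ((i : ℤ) - (j : ℤ)).natAbs) :
    muK G k ≤ Fintype.card V - l + k + 1 :=
  stmt10_general G k p l hlen hiso
end

section
/- For the path P_n on n ≥ 1 vertices and any k ≥ 0, μ_k(P_n) = min{n, k + 2}. -/
open scoped Classical

variable {V : Type*}

/-
Any `k + 2` vertices of a preconnected graph are mutually `k`-visible: a path between two of
them has at most the remaining `#X - 2` of them as internal vertices. Conversely, in `P_n` every
walk from the least to the greatest vertex of `X` passes through all of `X`, so the other
`#X - 2` vertices of `X` are internal and `#X ≤ k + 2`.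
-/

open Finset

namespace SimpleGraph

theorem Walk.IsPath.mem_support_tail_dropLast_iff {G : SimpleGraph V} {u v x : V}
    {p : G.Walk u v} (hp : p.IsPath) :
    x ∈ p.support.tail.dropLast ↔ x ∈ p.support ∧ x ≠ u ∧ x ≠ v := by
  have hnodup := hp.support_nodup
  rw [← p.cons_tail_support] at hnodup ⊢
  by_cases huv : u = v
  · subst huv
    simp [(isPath_iff_nil.mp hp).eq_nil]
  have hne : p.support.tail ≠ [] := List.ne_nil_of_mem (p.end_mem_tail_support_of_ne huv)
  have hlast : p.support.tail.getLast hne = v := by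
    rw [List.getLast_tail]; exact p.getLast_support
  rw [← List.dropLast_append_getLast hne, hlast] at hnodup ⊢
  grind

theorem Walk.mem_support_of_le_of_le_of_pathGraph {n : ℕ} {u v x : Fin n}
    (p : (pathGraph n).Walk u v) (hux : u ≤ x) (hxv : x ≤ v) : x ∈ p.support := by
  induction p with
  | nil => simp [le_antisymm hux hxv]
  | @cons a w b h q ih =>
    rcases eq_or_lt_of_le hux with rfl | hax
    · simp
    · have hwx : w ≤ x := by
        simp only [pathGraph_adj, Fin.le_def, Fin.lt_def] at h hax ⊢
        omega
      exact List.mem_cons_of_mem _ (ih hwx hxv)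

end SimpleGraph

open SimpleGraph

section

variable {G : SimpleGraph V} {u v : V} {X : Finset V} {k : ℕ}

theorem internalCount_eq_card_filter {p : G.Walk u v} (hp : p.IsPath) :
    internalCount p X = #{x ∈ X | x ∈ p.support ∧ x ≠ u ∧ x ≠ v} := by
  have hnodup : p.support.tail.dropLast.Nodup :=
    (hp.support_nodup.sublist (List.tail_sublist _)).sublist (List.dropLast_sublist _)
  rw [internalCount, List.countP_eq_length_filter, ← List.toFinset_card_of_nodup (hnodup.filter _)]
  congr 1
  ext x
  simp [hp.mem_support_tail_dropLast_iff, and_comm]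

theorem internalCount_le_card_sub_two {p : G.Walk u v} (hp : p.IsPath) (hu : u ∈ X) (hv : v ∈ X)
    (huv : u ≠ v) : internalCount p X ≤ #X - 2 := by
  have hcard : #((X.erase u).erase v) = #X - 2 := by
    rw [card_erase_of_mem (mem_erase.mpr ⟨huv.symm, hv⟩), card_erase_of_mem hu]
    rfl
  rw [internalCount_eq_card_filter hp, ← hcard]
  refine card_le_card fun x hx => ?_
  simp only [mem_filter] at hx
  simp [hx.1, hx.2.2.1, hx.2.2.2]

theorem card_le_internalCount_add_two {p : G.Walk u v} (hp : p.IsPath)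
    (hX : ∀ x ∈ X, x ∈ p.support) : #X ≤ internalCount p X + 2 := by
  rw [internalCount_eq_card_filter hp]
  calc #X ≤ #({x ∈ X | x ∈ p.support ∧ x ≠ u ∧ x ≠ v} ∪ {u, v}) := by
        refine card_le_card fun x hx => ?_
        by_cases hxu : x = u <;> by_cases hxv : x = v <;> simp [*]
    _ ≤ _ := (card_union_le _ _).trans (Nat.add_le_add_left card_le_two _)

theorem mutVis_of_card_le (hG : G.Preconnected) (hX : #X ≤ k + 2) : MutVis G X k := by
  intro u hu v hv huv
  obtain ⟨p, hp, hlen⟩ := (hG u v).exists_path_of_dist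
  exact ⟨p, hp, hlen, (internalCount_le_card_sub_two hp hu hv huv).trans (by omega)⟩

theorem exists_mutVis_card_eq [Fintype V] (hG : G.Preconnected) {m : ℕ}
    (hmV : m ≤ Fintype.card V) (hmk : m ≤ k + 2) : ∃ X : Finset V, MutVis G X k ∧ #X = m := by
  obtain ⟨X, -, hX⟩ := exists_subset_card_eq (s := univ) (by simpa using hmV)
  exact ⟨X, mutVis_of_card_le hG (hX ▸ hmk), hX⟩

theorem card_le_of_mutVis_pathGraph {n : ℕ} {X : Finset (Fin n)} (hX : MutVis (pathGraph n) X k) :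
    #X ≤ k + 2 := by
  rcases le_or_gt #X 1 with hX1 | hX1
  · omega
  have hne : X.Nonempty := card_pos.mp (by omega)
  obtain ⟨p, hp, -, hcount⟩ := hX _ (X.min'_mem hne) _ (X.max'_mem hne)
    (min'_lt_max'_of_card X hX1).ne
  have hsupp : ∀ x ∈ X, x ∈ p.support := fun x hx =>
    p.mem_support_of_le_of_le_of_pathGraph (X.min'_le x hx) (X.le_max' x hx)
  exact (card_le_internalCount_add_two hp hsupp).trans (by omega)

end

theorem stmt11_general (n k : ℕ) :
    muK (SimpleGraph.pathGraph n) k = min n (k + 2) := by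
  rw [muK]
  refine IsGreatest.csSup_eq ⟨?_, ?_⟩
  · exact exists_mutVis_card_eq (pathGraph_preconnected n) (by simp) (min_le_right _ _)
  · rintro _ ⟨X, hX, rfl⟩
    exact le_min (by simpa using X.card_le_univ) (card_le_of_mutVis_pathGraph hX)

theorem stmt11 (n k : ℕ) (hn : 1 ≤ n) :
    muK (SimpleGraph.pathGraph n) k = min n (k + 2) :=
  stmt11_general n k
end

section
/- For the cycle C_n with n ≥ 3 and any integer k with 0 ≤ k ≤ n − 2, μ_k(C_n) = min{n, 2k + 3}. -/
open scoped Classical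

variable {V : Type*}

/-!
For the upper bound fix `u ∈ X` and list the other vertices of `X` in the order in which they are
met going around the cycle from `u`. If `#X ≥ 2k + 4`, the `(k + 2)`-nd of them, `v`, has exactly
`k + 1` vertices of `X` strictly between `u` and `v` on one side and at least `k + 1` on the other;
but every `u`-`v` path passes through all vertices of one of the two open arcs.

For the lower bound, when `n ≤ 2k + 3` the whole vertex set works since a shortest path has at
most `n / 2 - 1` interior vertices; otherwise take two blocks of `k + 2` and `k + 1` consecutive
vertices with gaps as equal as possible: between vertices of different blocks, the arc carrying
at most `k` vertices of `X` is also the shorter one.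
-/

open Finset SimpleGraph

theorem List.Nodup.countP_eq_card_filter_mem {α : Type*} [DecidableEq α] {l : List α}
    (hl : l.Nodup) {X : Finset α} {P : α → Bool} (hP : ∀ x, P x ↔ x ∈ X) :
    l.countP P = #{x ∈ X | x ∈ l} := by
  rw [List.countP_eq_length_filter, ← List.toFinset_card_of_nodup (hl.filter _)]
  congr 1
  ext x
  simp [hP, and_comm]

lemma internalCount_eq_card [DecidableEq V] {G : SimpleGraph V} {u v : V} {p : G.Walk u v}
    (hp : p.IsPath) (X : Finset V) :
    internalCount p X = #{x ∈ X | x ∈ p.support ∧ x ≠ u ∧ x ≠ v} := by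
  cases p with
  | nil => simp [internalCount]
  | cons h q =>
    obtain ⟨hq, hu⟩ := Walk.cons_isPath_iff h q |>.mp hp
    have hnd := hq.support_nodup
    rw [← q.dropLast_support_concat, List.nodup_append] at hnd
    rw [← q.dropLast_support_concat] at hu
    obtain ⟨hnd, -, hv⟩ := hnd
    rw [internalCount, Walk.support_cons, List.tail_cons,
      hnd.countP_eq_card_filter_mem (X := X) (by simp), ← q.dropLast_support_concat]
    congr 1
    ext x
    simp only [mem_filter, List.mem_cons, List.mem_append] at hu hv ⊢
    grind

lemma card_inter_le_internalCount [DecidableEq V] {G : SimpleGraph V} {u v : V}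
    {p : G.Walk u v} (hp : p.IsPath) {X A : Finset V} (hA : ∀ x ∈ A, x ∈ p.support)
    (hu : u ∉ A) (hv : v ∉ A) :
    #(X ∩ A) ≤ internalCount p X := by
  rw [internalCount_eq_card hp]
  refine card_le_card fun x hx => ?_
  obtain ⟨hxX, hxA⟩ := mem_inter.mp hx
  exact mem_filter.mpr ⟨hxX, hA x hxA, ne_of_mem_of_not_mem hxA hu,
    ne_of_mem_of_not_mem hxA hv⟩

theorem Fin.val_sub_eq_ite {n : ℕ} (a b : Fin n) :
    (a - b).val = if b.val ≤ a.val then a.val - b.val else n + a.val - b.val := by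
  split_ifs with h
  · exact Fin.coe_sub_iff_le.mpr h
  · exact Fin.coe_sub_iff_lt.mpr (not_le.mp h)

variable {n : ℕ}

def openArc (u v : Fin n) : Finset (Fin n) := {w | w ≠ u ∧ (w - u).val < (v - u).val}

@[simp]
lemma mem_openArc {u v w : Fin n} :
    w ∈ openArc u v ↔ w ≠ u ∧ (w - u).val < (v - u).val := by
  simp [openArc]

lemma card_openArc [NeZero n] (u v : Fin n) : #(openArc u v) = (v - u).val - 1 := by
  rw [card_equiv (Equiv.subRight u) (t := Ioo 0 (v - u))
    (by simp [Fin.pos_iff_ne_zero, sub_eq_zero]), Fin.card_Ioo, Fin.val_zero, Nat.sub_zero]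

lemma val_sub_add_val_sub {u v : Fin n} (h : u ≠ v) : (v - u).val + (u - v).val = n := by
  rw [Fin.val_sub_eq_ite, Fin.val_sub_eq_ite, Ne, Fin.ext_iff] at *
  split_ifs <;> omega

lemma mem_openArc_or_mem_openArc {u v w : Fin n} (huv : u ≠ v) (hu : w ≠ u) (hv : w ≠ v) :
    w ∈ openArc u v ∨ w ∈ openArc v u := by
  simp only [mem_openArc, Ne, Fin.ext_iff, Fin.val_sub_eq_ite] at *
  split_ifs at * <;> omega

lemma notMem_openArc_of_mem_openArc {u v w : Fin n} (h : w ∈ openArc u v) :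
    w ∉ openArc v u := by
  simp only [mem_openArc, Ne, Fin.ext_iff, Fin.val_sub_eq_ite] at *
  split_ifs at * <;> omega

lemma val_sub_lt_of_adj {a b x y : Fin n} (hxy : (cycleGraph n).Adj x y) (hx : x ≠ b)
    (hy : y ≠ a) (h : (x - b).val < (a - b).val) : (y - b).val < (a - b).val := by
  rw [cycleGraph_adj'] at hxy
  rw [Ne, Fin.ext_iff] at hx hy
  simp only [Fin.val_sub_eq_ite] at *
  split_ifs at * <;> omega

/-- If `a ∈ openArc u v` and `b ∈ openArc v u` were both avoided, the walk would have to leave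
the arc from `b` to `a` containing `u` in a single step, which is impossible without visiting
`a` or `b`. -/
lemma openArc_subset_or_openArc_subset_support {u v : Fin n} (p : (cycleGraph n).Walk u v) :
    openArc u v ⊆ p.support.toFinset ∨ openArc v u ⊆ p.support.toFinset := by
  by_contra! h
  obtain ⟨⟨a, ha, hap⟩, ⟨b, hb, hbp⟩⟩ := And.imp not_subset.mp not_subset.mp h
  rw [List.mem_toFinset] at hap hbp
  have sides : (u - b).val < (a - b).val ∧ ¬(v - b).val < (a - b).val := by
    rw [mem_openArc, Ne, Fin.ext_iff] at ha hb
    simp only [Fin.val_sub_eq_ite] at *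
    split_ifs at * <;> omega
  obtain ⟨d, hd, hdS, hdS'⟩ :=
    p.exists_boundary_dart {x | (x - b).val < (a - b).val} sides.1 sides.2
  have hfst := p.dart_fst_mem_support_of_mem_darts hd
  have hsnd := p.dart_snd_mem_support_of_mem_darts hd
  exact hdS' (val_sub_lt_of_adj d.adj (by rintro rfl; exact hbp hfst)
    (by rintro rfl; exact hap hsnd) hdS)

lemma val_sub_le_length_of_openArc_subset [NeZero n] {u v x y : Fin n}
    (p : (cycleGraph n).Walk u v) (hx : x ∈ p.support) (hy : y ∈ p.support) (hxy : x ≠ y)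
    (h : openArc x y ⊆ p.support.toFinset) :
    (y - x).val ≤ p.length := by
  have hsub : insert x (insert y (openArc x y)) ⊆ p.support.toFinset := by
    simp [insert_subset_iff, hx, hy, h]
  have hcard := (card_le_card hsub).trans (List.toFinset_card_le _)
  rw [card_insert_of_notMem (by simp [hxy]), card_insert_of_notMem (by simp), card_openArc,
    Walk.length_support] at hcard
  have : (y - x).val ≠ 0 := by simpa [sub_eq_zero] using hxy.symm
  omega

lemma min_val_sub_le_length [NeZero n] {u v : Fin n} (p : (cycleGraph n).Walk u v) :
    min (v - u).val (u - v).val ≤ p.length := by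
  obtain rfl | huv := eq_or_ne u v
  · simp
  rcases openArc_subset_or_openArc_subset_support p with h | h
  · exact min_le_of_left_le (val_sub_le_length_of_openArc_subset p p.start_mem_support
      p.end_mem_support huv h)
  · exact min_le_of_right_le (val_sub_le_length_of_openArc_subset p p.end_mem_support
      p.start_mem_support huv.symm h)

lemma exists_walk_length_eq_val_sub [NeZero n] (u v : Fin n) :
    ∃ p : (cycleGraph n).Walk u v, p.length = (v - u).val ∧
      ∀ x ∈ p.support, (x - u).val ≤ (v - u).val := by
  induction hd : (v - u).val generalizing v with
  | zero =>
    obtain rfl : v = u := sub_eq_zero.mp (Fin.ext hd)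
    exact ⟨Walk.nil, rfl, by simp⟩
  | succ d ih =>
    have hn : 1 < n := by have := (v - u).isLt; omega
    have hv : (v - 1 - u).val = d := by
      rw [sub_right_comm, Fin.val_sub_one_of_ne_zero (by simp [Fin.ext_iff, hd]), hd,
        Nat.add_sub_cancel]
    obtain ⟨q, hq, hqs⟩ := ih (v - 1) hv
    have hadj : (cycleGraph n).Adj (v - 1) v :=
      cycleGraph_adj'.mpr (Or.inr (by simp [Nat.mod_eq_of_lt hn]))
    refine ⟨q.concat hadj, by simp [hq], fun x hx => ?_⟩
    rw [Walk.support_concat, List.mem_append, List.mem_singleton] at hx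
    rcases hx with hx | rfl
    · exact (hqs x hx).trans (by omega)
    · exact hd.le

lemma cycleGraph_dist_eq_val_sub [NeZero n] {u v : Fin n} (h : 2 * (v - u).val ≤ n) :
    (cycleGraph n).dist u v = (v - u).val := by
  obtain ⟨p, hp, -⟩ := exists_walk_length_eq_val_sub u v
  refine le_antisymm (hp ▸ dist_le p) ?_
  obtain ⟨q, hq⟩ := cycleGraph_preconnected u v |>.exists_walk_length_eq_dist
  refine hq ▸ le_trans (le_min le_rfl ?_) (min_val_sub_le_length q)
  obtain rfl | huv := eq_or_ne u v
  · simp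
  · have := val_sub_add_val_sub huv
    omega

/-- The positive arc from `u` to `v` is a shortest `u`-`v` path with at most `k` interior vertices
in `X`. -/
def ArcVisible (X : Finset (Fin n)) (k : ℕ) (u v : Fin n) : Prop :=
  2 * (v - u).val ≤ n ∧ #(X ∩ openArc u v) ≤ k

lemma ArcVisible.exists_isPath [NeZero n] {X : Finset (Fin n)} {k : ℕ} {u v : Fin n}
    (h : ArcVisible X k u v) :
    ∃ p : (cycleGraph n).Walk u v, p.IsPath ∧ p.length = (cycleGraph n).dist u v ∧
      internalCount p X ≤ k := by
  obtain ⟨p, hp, hps⟩ := exists_walk_length_eq_val_sub u v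
  have hpd : p.length = (cycleGraph n).dist u v := by rw [hp, cycleGraph_dist_eq_val_sub h.1]
  have hpath := p.isPath_of_length_eq_dist hpd
  refine ⟨p, hpath, hpd, le_trans ?_ h.2⟩
  rw [internalCount_eq_card hpath]
  refine card_le_card fun x hx => ?_
  obtain ⟨hxX, hxp, hxu, hxv⟩ := mem_filter.mp hx
  have : (x - u).val ≠ (v - u).val := fun h => hxv (sub_left_inj.mp (Fin.ext h))
  exact mem_inter.mpr ⟨hxX, mem_openArc.mpr ⟨hxu, lt_of_le_of_ne (hps x hxp) this⟩⟩

lemma mutVis_of_arcVisible [NeZero n] {X : Finset (Fin n)} {k : ℕ}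
    (h : ∀ u ∈ X, ∀ v ∈ X, u ≠ v → ArcVisible X k u v ∨ ArcVisible X k v u) :
    MutVis (cycleGraph n) X k := by
  intro u hu v hv huv
  rcases h u hu v hv huv with huv | hvu
  · exact huv.exists_isPath
  · obtain ⟨p, hp, hpd, hpX⟩ := hvu.exists_isPath
    refine ⟨p.reverse, hp.reverse, by rw [Walk.length_reverse, hpd, dist_comm], ?_⟩
    rw [internalCount_eq_card hp.reverse]
    rw [internalCount_eq_card hp] at hpX
    simpa only [Walk.support_reverse, List.mem_reverse, and_comm (a := _ ≠ v)] using hpX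

lemma card_eq_card_inter_openArc_add [NeZero n] {X : Finset (Fin n)} {u v : Fin n} (hu : u ∈ X)
    (hv : v ∈ X) (huv : u ≠ v) :
    #X = #(X ∩ openArc u v) + #(X ∩ openArc v u) + 2 := by
  have hX : X = insert u (insert v (X ∩ openArc u v ∪ X ∩ openArc v u)) := by
    ext w
    simp only [mem_insert, mem_union, mem_inter]
    constructor
    · intro hw
      by_cases hwu : w = u
      · exact Or.inl hwu
      by_cases hwv : w = v
      · exact Or.inr (Or.inl hwv)
      · exact Or.inr (Or.inr
          ((mem_openArc_or_mem_openArc huv hwu hwv).imp (⟨hw, ·⟩) (⟨hw, ·⟩)))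
    · rintro (rfl | rfl | ⟨hw, -⟩ | ⟨hw, -⟩) <;> assumption
  have hdisj : Disjoint (X ∩ openArc u v) (X ∩ openArc v u) :=
    disjoint_left.mpr fun w h₁ h₂ =>
      notMem_openArc_of_mem_openArc (mem_inter.mp h₁).2 (mem_inter.mp h₂).2
  conv_lhs => rw [hX]
  rw [card_insert_of_notMem (by simp [huv]), card_insert_of_notMem (by simp),
    card_union_of_disjoint hdisj]

lemma card_inter_openArc_lt [NeZero n] {X : Finset (Fin n)} {u v w : Fin n} (hv : v ∈ X)
    (hvu : v ≠ u) (h : (v - u).val < (w - u).val) :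
    #(X ∩ openArc u v) < #(X ∩ openArc u w) := by
  refine card_lt_card ((ssubset_iff_of_subset fun x hx => ?_).mpr ⟨v, ?_, ?_⟩)
  · simp only [mem_inter, mem_openArc] at hx ⊢
    exact ⟨hx.1, hx.2.1, hx.2.2.trans h⟩
  · simp [hv, hvu, h]
  · simp

lemma exists_card_inter_openArc_eq [NeZero n] {X : Finset (Fin n)} {u : Fin n} (hu : u ∈ X)
    {j : ℕ} (hj : j + 1 < #X) : ∃ v ∈ X, v ≠ u ∧ #(X ∩ openArc u v) = j := by
  have hmaps : ∀ v ∈ X.erase u, #(X ∩ openArc u v) ∈ range (#X - 1) := by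
    intro v hv
    have : X ∩ openArc u v ⊆ (X.erase u).erase v := fun x hx => by
      simp only [mem_inter, mem_openArc] at hx
      simp only [mem_erase]
      exact ⟨fun h => (h ▸ hx.2.2).false, hx.2.1, hx.1⟩
    have := card_le_card this
    rw [card_erase_of_mem hv, card_erase_of_mem hu] at this
    rw [mem_range]
    omega
  have hinj : ∀ v₁ ∈ X.erase u, ∀ v₂ ∈ X.erase u,
      #(X ∩ openArc u v₁) = #(X ∩ openArc u v₂) → v₁ = v₂ := by
    intro v₁ hv₁ v₂ hv₂ heq
    by_contra hne
    have : (v₁ - u).val ≠ (v₂ - u).val := fun h => hne (sub_left_inj.mp (Fin.ext h))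
    rcases this.lt_or_gt with h | h
    · exact (card_inter_openArc_lt (mem_of_mem_erase hv₁) (ne_of_mem_erase hv₁) h).ne heq
    · exact (card_inter_openArc_lt (mem_of_mem_erase hv₂) (ne_of_mem_erase hv₂) h).ne' heq
  obtain ⟨v, hv, hvj⟩ := surj_on_of_inj_on_of_card_le (fun v _ => #(X ∩ openArc u v))
    hmaps (fun v₁ v₂ h₁ h₂ => hinj v₁ h₁ v₂ h₂)
    (by rw [card_range, card_erase_of_mem hu]) j (mem_range.mpr (by omega))
  exact ⟨v, mem_of_mem_erase hv, ne_of_mem_erase hv, hvj.symm⟩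

lemma card_le_of_mutVis [NeZero n] {X : Finset (Fin n)} {k : ℕ}
    (hX : MutVis (cycleGraph n) X k) : #X ≤ 2 * k + 3 := by
  by_contra! hk
  obtain ⟨u, hu⟩ : X.Nonempty := card_pos.mp (by omega)
  obtain ⟨v, hv, hvu, hcard⟩ := exists_card_inter_openArc_eq hu (j := k + 1) (by omega)
  have hsplit := card_eq_card_inter_openArc_add hu hv hvu.symm
  obtain ⟨p, hp, -, hpk⟩ := hX u hu v hv hvu.symm
  rcases openArc_subset_or_openArc_subset_support p with h | h <;>
  · have := card_inter_le_internalCount hp (X := X) (fun x hx => List.mem_toFinset.mp (h hx))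
      (by simp) (by simp)
    omega

lemma mutVis_univ [NeZero n] {k : ℕ} (h : n ≤ 2 * k + 3) : MutVis (cycleGraph n) univ k := by
  refine mutVis_of_arcVisible fun u _ v _ huv => ?_
  have := val_sub_add_val_sub huv
  simp only [ArcVisible, univ_inter, card_openArc]
  omega

/-- The gap after the first block has `(n - 2k - 2) / 2 = ⌈(n - 2k - 3) / 2⌉` vertices. -/
def blockSet {n k : ℕ} (hk : 2 * k + 4 ≤ n) : Finset (Fin n) :=
  (range (k + 2) ∪ Icc (k + 2 + (n - 2 * k - 2) / 2) (2 * k + 2 + (n - 2 * k - 2) / 2)).attachFin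
    fun m hm => by simp only [mem_union, mem_range, mem_Icc] at hm; omega

lemma card_blockSet {k : ℕ} (hk : 2 * k + 4 ≤ n) : #(blockSet hk) = 2 * k + 3 := by
  rw [blockSet, card_attachFin, card_union_of_disjoint, card_range, Nat.card_Icc]
  · omega
  · exact disjoint_left.mpr fun m h₁ h₂ => by
      simp only [mem_range, mem_Icc] at h₁ h₂
      omega

lemma arcVisible_blockSet_of_val_lt [NeZero n] {k : ℕ} (hk : 2 * k + 4 ≤ n) {u v : Fin n}
    (hu : u ∈ blockSet hk) (hv : v ∈ blockSet hk) (huv : u.val < v.val) :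
    ArcVisible (blockSet hk) k u v ∨ ArcVisible (blockSet hk) k v u := by
  set s := k + 2 + (n - 2 * k - 2) / 2 with hs
  have hmem (w : Fin n) :
      w ∈ blockSet hk ↔ w.val < k + 2 ∨ s ≤ w.val ∧ w.val ≤ s + k := by
    simp only [blockSet, mem_attachFin, mem_union, mem_range, mem_Icc]; omega
  have hvu : (v - u).val = v.val - u.val := by rw [Fin.val_sub_eq_ite, if_pos huv.le]
  have huv' : (u - v).val = n + u.val - v.val := by rw [Fin.val_sub_eq_ite, if_neg (by omega)]
  have card_le {A : Finset (Fin n)} (B : Finset ℕ)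
      (h : ∀ w ∈ blockSet hk ∩ A, w.val ∈ B) :
      #(blockSet hk ∩ A) ≤ #B :=
    card_le_card_of_injOn Fin.val h Fin.val_injective.injOn
  rw [hmem] at hu hv
  by_cases hshort : v.val - u.val ≤ k + 1
  · refine Or.inl ⟨by omega, (card_le_card inter_subset_right).trans ?_⟩
    rw [card_openArc]
    omega
  by_cases hcw : (k + 1 - u.val) + (v.val - s) ≤ k
  · refine Or.inl ⟨by omega,
      (card_le (Ioo u.val (k + 2) ∪ Ico s v.val) fun w hw => ?_).trans ?_⟩
    · rw [mem_inter, hmem, mem_openArc, hvu, Ne, Fin.ext_iff, Fin.val_sub_eq_ite] at hw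
      simp only [mem_union, mem_Ioo, mem_Ico]
      split_ifs at hw <;> omega
    · exact (card_union_le _ _).trans (by simp only [Nat.card_Ioo, Nat.card_Ico]; omega)
  · refine Or.inr ⟨by omega,
      (card_le (range u.val ∪ Ioc v.val (s + k)) fun w hw => ?_).trans ?_⟩
    · rw [mem_inter, hmem, mem_openArc, huv', Ne, Fin.ext_iff, Fin.val_sub_eq_ite] at hw
      simp only [mem_union, mem_range, mem_Ioc]
      split_ifs at hw <;> omega
    · exact (card_union_le _ _).trans (by simp only [card_range, Nat.card_Ioc]; omega)

lemma mutVis_blockSet [NeZero n] {k : ℕ} (hk : 2 * k + 4 ≤ n) :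
    MutVis (cycleGraph n) (blockSet hk) k := by
  refine mutVis_of_arcVisible fun u hu v hv huv => ?_
  rcases (Fin.val_ne_iff.mpr huv).lt_or_gt with h | h
  · exact arcVisible_blockSet_of_val_lt hk hu hv h
  · exact (arcVisible_blockSet_of_val_lt hk hv hu h).symm

theorem stmt12_general (n k : ℕ) (hn : 3 ≤ n) :
    muK (SimpleGraph.cycleGraph n) k = min n (2 * k + 3) := by
  have : NeZero n := ⟨by omega⟩
  refine IsGreatest.csSup_eq ⟨?_, ?_⟩
  · rcases le_or_gt n (2 * k + 3) with h | h
    · exact ⟨univ, mutVis_univ h, by simp [h]⟩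
    · exact ⟨blockSet (k := k) h, mutVis_blockSet h, by rw [card_blockSet]; omega⟩
  · rintro _ ⟨X, hX, rfl⟩
    exact le_min (card_le_univ X |>.trans_eq (Fintype.card_fin n)) (card_le_of_mutVis hX)

theorem stmt12 (n k : ℕ) (hn : 3 ≤ n) (hk : k ≤ n - 2) :
    muK (SimpleGraph.cycleGraph n) k = min n (2 * k + 3) :=
  stmt12_general n k hn
end
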